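/- arXiv:1508.00464 — 3 statements merged into one kernel-verified Lean document; each statement's English description precedes it below -/
import Mathlib

section
/- Let 𝒮 be a symmetrization space on a metric space (𝒜,d) with nonexpansive idempotent projector ⋆, let J be an asymmetry function on 𝒮, let (s_n)_{n≥1} be a sequence in 𝒮 and X ∈ 𝒜. If 𝒮 and J are both ⋆-compatible, then liminf_{n→∞} d(X⋆, X^{s_1…s_n}) = 0 if and only if the set {X^{s_1…s_n} : n ≥ 1} has compact closure in 𝒜 and liminf_{n→∞} J(X^{s_1…s_n}) = J(X⋆). Moreover, in that case the sequence (X^{s_1…s_n})_{n≥1} converges to X⋆. -/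
open MeasureTheory ProbabilityTheory Filter Topology

noncomputable section

/-- An (abstract) symmetrization space: a family of maps `X ↦ σ.act X s` of a metric
space `A`, parametrized by a topological space `S`, which is jointly continuous,
idempotent and nonexpansive. -/
structure SymmetrizationSpace (A : Type*) [MetricSpace A]
    (S : Type*) [TopologicalSpace S] where
  act : A → S → A
  continuous_act : Continuous fun p : A × S => act p.1 p.2
  idem : ∀ X s, act (act X s) s = act X s
  nonexpansive : ∀ X Y s, dist (act X s) (act Y s) ≤ dist X Y

variable {A : Type*} [MetricSpace A] {S : Type*} [TopologicalSpace S]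

/-- `σ` is `⋆`-compatible with the projector `star`. -/
def SymmetrizationSpace.StarCompatible (σ : SymmetrizationSpace A S) (star : A → A) : Prop :=
  (∀ (s : S) (X : A), star (σ.act X s) = star X ∧ σ.act (star X) s = star X) ∧
  (∀ X : A, (∀ s : S, σ.act X s = X) → X = star X)

/-- `J` is an asymmetry function on `σ`. -/
def IsAsymmetry (σ : SymmetrizationSpace A S) (J : A → ℝ) : Prop :=
  Continuous J ∧ ∀ (X : A) (s : S), J (σ.act X s) ≤ J X

/-- `J` is a `⋆`-compatible asymmetry function. -/
def IsStarCompatibleAsymmetry (σ : SymmetrizationSpace A S) (star : A → A) (J : A → ℝ) :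
    Prop :=
  IsAsymmetry σ J ∧ ∀ X : A, J X ≤ J (star X) → X = star X

/-- The orbit `X^𝒮 = {X^{s_1 ⋯ s_n} : n ≥ 1, s_i ∈ 𝒮}` of `X`. -/
def SymmetrizationSpace.orbit (σ : SymmetrizationSpace A S) (X : A) : Set A :=
  {Y | ∃ l : List S, l ≠ [] ∧ Y = l.foldl σ.act X}

/-- Successive symmetrizations along a deterministic sequence:
`iterSeq σ X u n = X^{u_0 u_1 ⋯ u_n}`. -/
def SymmetrizationSpace.iterSeq (σ : SymmetrizationSpace A S) (X : A) (u : ℕ → S) :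
    ℕ → A
  | 0 => σ.act X (u 0)
  | n + 1 => σ.act (σ.iterSeq X u n) (u (n + 1))

/-- If `σ` and `J` are `⋆`-compatible, then the iterated symmetrizations
approach `X⋆` along a subsequence if and only if the orbit sequence has compact closure
and the asymmetries converge (in `liminf`) to the minimal value `J(X⋆)`; in that case the
whole sequence converges to `X⋆`. -/
theorem statement4 [TopologicalSpace.MetrizableSpace S] [SecondCountableTopology S]
    [Nonempty S]
    (σ : SymmetrizationSpace A S) (star : A → A)
    (hstar_ne : ∀ X Y : A, dist (star X) (star Y) ≤ dist X Y)
    (hstar_proj : ∀ X : A, star (star X) = star X)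
    (hσcomp : σ.StarCompatible star)
    (J : A → ℝ) (hJ : IsStarCompatibleAsymmetry σ star J)
    (u : ℕ → S) (X : A) :
    (liminf (fun n => dist (star X) (σ.iterSeq X u n)) atTop = 0 ↔
      IsCompact (closure (Set.range (σ.iterSeq X u))) ∧
        liminf (fun n => J (σ.iterSeq X u n)) atTop = J (star X)) ∧
    (liminf (fun n => dist (star X) (σ.iterSeq X u n)) atTop = 0 →
      Tendsto (σ.iterSeq X u) atTop (nhds (star X))) := by

  obtain ⟨⟨hJcont, hJmono⟩, hJstar⟩ := hJ
  set Y := σ.iterSeq X u with hY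
  have hYsucc : ∀ n, Y (n + 1) = σ.act (Y n) (u (n + 1)) := fun n => rfl
  have hstarY : ∀ n, star (Y n) = star X := by
    intro n
    induction n with
    | zero => exact (hσcomp.1 (u 0) X).1
    | succ n ih => rw [hYsucc, (hσcomp.1 (u (n + 1)) (Y n)).1, ih]
  set a : ℕ → ℝ := fun n => dist (star X) (Y n) with ha
  have haAnti : Antitone a := by
    apply antitone_nat_of_succ_le
    intro n
    calc a (n + 1) = dist (σ.act (star X) (u (n + 1))) (σ.act (Y n) (u (n + 1))) := by
          rw [(hσcomp.1 (u (n + 1)) X).2]; rfl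
      _ ≤ a n := σ.nonexpansive _ _ _
  have hbdd : BddBelow (Set.range a) := by
    refine ⟨0, ?_⟩
    rintro x ⟨n, rfl⟩
    exact dist_nonneg
  have haL : Tendsto a atTop (𝓝 (⨅ n, a n)) := tendsto_atTop_ciInf haAnti hbdd
  have haliminf : liminf a atTop = ⨅ n, a n := haL.liminf_eq
  have hconv : liminf a atTop = 0 → Tendsto Y atTop (𝓝 (star X)) := by
    intro h0
    rw [haliminf] at h0
    have h0' : Tendsto a atTop (𝓝 0) := h0 ▸ haL
    rw [tendsto_iff_dist_tendsto_zero]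
    simpa only [dist_comm] using h0'
  have hJge : ∀ Z : A, J (star Z) ≤ J Z := by
    intro Z
    by_contra h
    push_neg at h
    have hz := hJstar Z h.le
    rw [← hz] at h
    exact lt_irrefl _ h
  refine ⟨⟨?_, ?_⟩, hconv⟩
  · -- forward direction
    intro h0
    have htend : Tendsto Y atTop (𝓝 (star X)) := hconv h0
    constructor
    · have hK := htend.isCompact_insert_range
      have hsub : closure (Set.range Y) ⊆ insert (star X) (Set.range Y) :=
        closure_minimal (Set.subset_insert _ _) hK.isClosed
      exact hK.of_isClosed_subset isClosed_closure hsub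
    · have : Tendsto (fun n => J (Y n)) atTop (𝓝 (J (star X))) :=
        (hJcont.tendsto _).comp htend
      exact this.liminf_eq
  · -- backward direction
    rintro ⟨hcomp, hliminfJ⟩
    set b : ℕ → ℝ := fun n => J (Y n) with hb
    have hbAnti : Antitone b := by
      apply antitone_nat_of_succ_le
      intro n
      calc b (n + 1) = J (σ.act (Y n) (u (n + 1))) := rfl
        _ ≤ b n := hJmono _ _
    have hbbdd : BddBelow (Set.range b) := by
      refine ⟨J (star X), ?_⟩
      rintro x ⟨n, rfl⟩
      calc J (star X) = J (star (Y n)) := by rw [hstarY]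
        _ ≤ J (Y n) := hJge _
    have hbL : Tendsto b atTop (𝓝 (⨅ n, b n)) := tendsto_atTop_ciInf hbAnti hbbdd
    have hbJ : Tendsto b atTop (𝓝 (J (star X))) := by
      rwa [← hbL.liminf_eq, hliminfJ] at hbL
    obtain ⟨Z, hZmem, φ, hφ, hZ⟩ :=
      hcomp.tendsto_subseq (fun n => subset_closure (Set.mem_range_self (f := Y) n))
    have hstarZ : star Z = star X := by
      have hle : ∀ k, dist (star Z) (star X) ≤ dist Z (Y (φ k)) := by
        intro k
        rw [← hstarY (φ k)]
        exact hstar_ne Z (Y (φ k))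
      have hd : Tendsto (fun k => dist Z (Y (φ k))) atTop (𝓝 0) := by
        have := tendsto_iff_dist_tendsto_zero.mp hZ
        simpa only [dist_comm, Function.comp] using this
      have h0 : dist (star Z) (star X) ≤ 0 := ge_of_tendsto hd (Filter.Eventually.of_forall hle)
      exact dist_le_zero.mp h0
    have hJZ : J Z = J (star X) := by
      have h1 : Tendsto (fun k => J (Y (φ k))) atTop (𝓝 (J Z)) :=
        (hJcont.tendsto _).comp hZ
      have h2 : Tendsto (fun k => J (Y (φ k))) atTop (𝓝 (J (star X))) :=
        hbJ.comp hφ.tendsto_atTop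
      exact tendsto_nhds_unique h1 h2
    have hZeq : Z = star X := by
      have : Z = star Z := hJstar Z (by rw [hstarZ, hJZ])
      rw [this, hstarZ]
    have haφ : Tendsto (fun k => a (φ k)) atTop (𝓝 0) := by
      have : Tendsto (fun k => dist (star X) (Y (φ k))) atTop (𝓝 (dist (star X) Z)) :=
        tendsto_const_nhds.dist hZ
      rw [hZeq, dist_self] at this
      exact this
    have haφ' : Tendsto (fun k => a (φ k)) atTop (𝓝 (⨅ n, a n)) :=
      haL.comp hφ.tendsto_atTop
    rw [haliminf]
    exact tendsto_nhds_unique haφ' haφ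
end
end

section
/- Let 𝒮 be a metrizable second-countable topological space and (S_n)_{n≥1} a time-homogeneous Markov process on 𝒮 with transition function P and iterated kernels P^k. Then for every Borel set A ⊆ 𝒮, the sequence (inf_{k≥1} P^k_{S_n}((𝒮 \ A)^k))_{n≥1} converges almost surely to the indicator function of the event ⋃_{n≥1} ⋂_{k≥n} {S_{k+1} ∉ A}. -/
open MeasureTheory ProbabilityTheory Filter Topology
open scoped ENNReal NNReal

noncomputable section

def iterK {S : Type*} [MeasurableSpace S] (κ : Kernel S S) :
    (n : ℕ) → S → Measure (Fin (n + 1) → S)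
  | 0, s => (κ s).map (fun x _ => x)
  | n + 1, s => (iterK κ n s).bind fun p => (κ (p (Fin.last n))).map (Fin.snoc p)

def IsMarkovChain {Ω S : Type*} [MeasurableSpace Ω] [MeasurableSpace S]
    (Pr : Measure Ω) (κ : Kernel S S) (Sp : ℕ → Ω → S) : Prop :=
  (∀ n, Measurable (Sp n)) ∧
  ∀ (n : ℕ) (A : Set S), MeasurableSet A →
    ∀ B : Set Ω,
      MeasurableSet[⨆ i : Fin (n + 1), MeasurableSpace.comap (Sp i) inferInstance] B →
      Pr (B ∩ Sp (n + 1) ⁻¹' A) = ∫⁻ ω in B, κ (Sp n ω) A ∂Pr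

/-!
Write `h_k(s)` for the probability that `k + 1` steps of the chain started at `s` all avoid `A`,
and `E_n` for the event that `S_j ∉ A` for every `j > n`. Iterating the Markov property gives
`∫_B h_k(S_n) = ℙ(B ∩ {S_{n+1}, …, S_{n+k+1} ∉ A})` for `B ∈ ℱ_n`, and monotone convergence in `k`
identifies `inf_k h_k(S_n)` with `ℙ(E_n | ℱ_n)`. The events `E_n` increase to `E = ⋃ E_n`, so for
`n ≥ m` we have `ℙ(E_m | ℱ_n) ≤ ℙ(E_n | ℱ_n) ≤ ℙ(E | ℱ_n)`; by Lévy's upward theorem the outer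
terms tend to `1_{E_m}` and `1_E`, and `1_{E_m}(ω) = 1_E(ω)` for `m` large.
-/

open scoped ENNReal

section CondExp

variable {Ω : Type*} {m m₀ : MeasurableSpace Ω} {μ : Measure Ω} [IsFiniteMeasure μ]

theorem ofReal_condExp_indicator_ae_eq (hm : m ≤ m₀) {E : Set Ω} (hE : MeasurableSet[m₀] E)
    {Y : Ω → ℝ≥0∞} (hY : Measurable[m] Y)
    (hYE : ∀ B, MeasurableSet[m] B → ∫⁻ ω in B, Y ω ∂μ = μ (B ∩ E)) :
    (fun ω => ENNReal.ofReal (μ[E.indicator (1 : Ω → ℝ) | m] ω)) =ᵐ[μ] Y := by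
  have hint : Integrable (E.indicator (1 : Ω → ℝ)) μ := (integrable_const 1).indicator hE
  have hmeas : Measurable[m] fun ω => ENNReal.ofReal (μ[E.indicator (1 : Ω → ℝ) | m] ω) :=
    stronglyMeasurable_condExp.measurable.ennreal_ofReal
  refine ae_eq_of_ae_eq_trim (hm := hm)
    (ae_eq_of_forall_setLIntegral_eq_of_sigmaFinite hmeas hY fun B hB _ => ?_)
  have hnonneg : 0 ≤ᵐ[μ.restrict B] μ[E.indicator (1 : Ω → ℝ) | m] :=
    ae_restrict_of_ae (condExp_nonneg (.of_forall (Set.indicator_nonneg fun _ _ => zero_le_one)))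
  rw [restrict_trim hm μ hB, lintegral_trim hm hmeas, lintegral_trim hm hY, hYE B hB,
    ← ofReal_integral_eq_lintegral_ofReal integrable_condExp.restrict hnonneg,
    setIntegral_condExp hm hint hB, integral_indicator_one hE, measureReal_restrict_apply hE,
    Set.inter_comm, ofReal_measureReal (measure_ne_top _ _)]

theorem tendsto_condExp_indicator_of_monotone (ℱ : Filtration ℕ m₀) {E : ℕ → Set Ω}
    (hE : Monotone E) (hEm : ∀ n, MeasurableSet[⨆ n, ℱ n] (E n)) :
    ∀ᵐ ω ∂μ, Tendsto (fun n => μ[(E n).indicator (1 : Ω → ℝ) | ℱ n] ω) atTop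
      (𝓝 ((⋃ n, E n).indicator (1 : Ω → ℝ) ω)) := by
  have hle : ⨆ n, ℱ n ≤ m₀ := iSup_le ℱ.le
  have hlevy : ∀ F, MeasurableSet[⨆ n, ℱ n] F → ∀ᵐ ω ∂μ,
      Tendsto (fun n => μ[F.indicator (1 : Ω → ℝ) | ℱ n] ω) atTop (𝓝 (F.indicator 1 ω)) :=
    fun F hF =>
    ((integrable_const 1).indicator (hle _ hF)).tendsto_ae_condExp
      (stronglyMeasurable_const.indicator hF)
  have hmono : ∀ {F G : Set Ω}, F ⊆ G → MeasurableSet[m₀] F → MeasurableSet[m₀] G → ∀ n,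
      μ[F.indicator (1 : Ω → ℝ) | ℱ n] ≤ᵐ[μ] μ[G.indicator 1 | ℱ n] := fun hFG hF hG n =>
    condExp_mono ((integrable_const 1).indicator hF) ((integrable_const 1).indicator hG)
      (.of_forall (Set.indicator_le_indicator_of_subset hFG fun _ => zero_le_one))
  have hEm₀ : ∀ n, MeasurableSet[m₀] (E n) := fun n => hle _ (hEm n)
  have hlower : ∀ᵐ ω ∂μ, ∀ m n, m ≤ n →
      μ[(E m).indicator (1 : Ω → ℝ) | ℱ n] ω ≤ μ[(E n).indicator 1 | ℱ n] ω :=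
    ae_all_iff.2 fun m => ae_all_iff.2 fun n => eventually_imp_distrib_left.2 fun hmn =>
      hmono (hE hmn) (hEm₀ m) (hEm₀ n) n
  have hupper : ∀ᵐ ω ∂μ, ∀ n,
      μ[(E n).indicator (1 : Ω → ℝ) | ℱ n] ω ≤ μ[(⋃ n, E n).indicator 1 | ℱ n] ω :=
    ae_all_iff.2 fun n => hmono (Set.subset_iUnion E n) (hEm₀ n) (.iUnion hEm₀) n
  filter_upwards [ae_all_iff.2 fun m => hlevy _ (hEm m), hlevy _ (.iUnion hEm), hlower, hupper]
    with ω hEω hUω hlow hup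
  obtain ⟨m, hm⟩ : ∃ m, (E m).indicator (1 : Ω → ℝ) ω = (⋃ n, E n).indicator 1 ω := by
    by_cases hω : ω ∈ ⋃ n, E n
    · obtain ⟨m, hm⟩ := Set.mem_iUnion.1 hω
      exact ⟨m, by rw [Set.indicator_of_mem hm, Set.indicator_of_mem hω]⟩
    · exact ⟨0, by rw [Set.indicator_of_notMem hω,
        Set.indicator_of_notMem fun h => hω (Set.mem_iUnion_of_mem 0 h)]⟩
  refine tendsto_of_tendsto_of_tendsto_of_le_of_le' (hm ▸ hEω m) hUω ?_ (.of_forall hup)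
  filter_upwards [eventually_ge_atTop m] with n hn using hlow m n hn

end CondExp

section Snoc

variable {S : Type*}

lemma snoc_forall_notMem_iff {A : Set S} {n : ℕ} (q : Fin n → S) (x : S) :
    (∀ i, (Fin.snoc q x : Fin (n + 1) → S) i ∉ A) ↔ (∀ i, q i ∉ A) ∧ x ∉ A := by
  simp [Fin.forall_fin_succ', Fin.snoc_castSucc, Fin.snoc_last]

variable [MeasurableSpace S]

lemma measurable_finSnoc {n : ℕ} :
    Measurable fun q : (Fin n → S) × S => (Fin.snoc q.1 q.2 : Fin (n + 1) → S) := by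
  refine measurable_pi_lambda _ fun i => ?_
  induction i using Fin.lastCases with
  | last => simpa only [Fin.snoc_last] using measurable_snd
  | cast j =>
    simp only [Fin.snoc_castSucc]
    exact (measurable_pi_apply j).comp measurable_fst

lemma measurable_snoc {n : ℕ} (q : Fin n → S) : Measurable (Fin.snoc (α := fun _ => S) q) :=
  measurable_finSnoc.comp measurable_prodMk_left

lemma measurableSet_forall_notMem {ι : Type*} [Countable ι] {A : Set S} (hA : MeasurableSet A) :
    MeasurableSet {p : ι → S | ∀ i, p i ∉ A} := by
  have : {p : ι → S | ∀ i, p i ∉ A} = Set.univ.pi fun _ => Aᶜ := by ext; simp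
  exact this ▸ .univ_pi fun _ => hA.compl

lemma measurable_indicator_forall_notMem {A : Set S} (hA : MeasurableSet A) {f : S → ℝ≥0∞}
    (hf : Measurable f) (n : ℕ) :
    Measurable ({p : Fin (n + 1) → S | ∀ i, p i ∉ A}.indicator fun p => f (p (Fin.last n))) :=
  (hf.comp (measurable_pi_apply _)).indicator (measurableSet_forall_notMem hA)

end Snoc

section Avoidance

variable {S : Type*} [MeasurableSpace S] (κ : Kernel S S) (A : Set S)

def tabooOp (f : S → ℝ≥0∞) (s : S) : ℝ≥0∞ := ∫⁻ x in Aᶜ, f x ∂κ s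

def avoidProb (k : ℕ) : S → ℝ≥0∞ := (tabooOp κ A)^[k + 1] 1

variable {κ A}

lemma measurable_tabooOp [IsSFiniteKernel κ] (hA : MeasurableSet A) {f : S → ℝ≥0∞}
    (hf : Measurable f) : Measurable (tabooOp κ A f) :=
  hf.setLIntegral_kernel hA.compl

lemma monotone_tabooOp : Monotone (tabooOp κ A) :=
  fun _ _ hfg _ => lintegral_mono fun x => hfg x

lemma tabooOp_one_apply (s : S) : tabooOp κ A 1 s = κ s Aᶜ :=
  setLIntegral_one _

lemma tabooOp_one_le [IsMarkovKernel κ] : tabooOp κ A 1 ≤ 1 := fun s =>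
  (tabooOp_one_apply s).trans_le prob_le_one

lemma avoidProb_zero : avoidProb κ A 0 = tabooOp κ A 1 := rfl

lemma avoidProb_succ (k : ℕ) : avoidProb κ A (k + 1) = tabooOp κ A (avoidProb κ A k) :=
  Function.iterate_succ_apply' _ _ _

lemma measurable_avoidProb [IsSFiniteKernel κ] (hA : MeasurableSet A) (k : ℕ) :
    Measurable (avoidProb κ A k) := by
  induction k with
  | zero => exact measurable_tabooOp hA measurable_const
  | succ k ih => rw [avoidProb_succ]; exact measurable_tabooOp hA ih

lemma avoidProb_le_one [IsMarkovKernel κ] (k : ℕ) : avoidProb κ A k ≤ 1 := by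
  induction k with
  | zero => exact tabooOp_one_le
  | succ k ih => rw [avoidProb_succ]; exact (monotone_tabooOp ih).trans tabooOp_one_le

lemma antitone_avoidProb [IsMarkovKernel κ] : Antitone (avoidProb κ A) :=
  antitone_nat_of_succ_le fun k =>
    (monotone_tabooOp.iterate (k + 1)) (tabooOp_one_le (κ := κ) (A := A))

lemma measurable_map_snoc [IsSFiniteKernel κ] (k : ℕ) :
    Measurable fun p : Fin (k + 1) → S =>
      (κ (p (Fin.last k))).map (Fin.snoc (α := fun _ => S) p) := by
  refine Measure.measurable_of_measurable_coe _ fun t ht => ?_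
  convert (κ.comap _ (measurable_pi_apply _)).measurable_kernel_prodMk_left
    (measurable_finSnoc ht) using 1
  funext p
  exact Measure.map_apply (measurable_snoc p) ht

lemma lintegral_map_snoc_indicator (hA : MeasurableSet A) {f : S → ℝ≥0∞} (hf : Measurable f)
    {n : ℕ} (q : Fin (n + 1) → S) :
    ∫⁻ p, {p : Fin (n + 2) → S | ∀ i, p i ∉ A}.indicator (fun p => f (p (Fin.last (n + 1)))) p
        ∂(κ (q (Fin.last n))).map (Fin.snoc q)
      = {p : Fin (n + 1) → S | ∀ i, p i ∉ A}.indicator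
          (fun q => tabooOp κ A f (q (Fin.last n))) q := by
  rw [lintegral_map (measurable_indicator_forall_notMem hA hf _) (measurable_snoc q)]
  by_cases hq : q ∈ {p : Fin (n + 1) → S | ∀ i, p i ∉ A}
  · rw [Set.indicator_of_mem hq, tabooOp, ← lintegral_indicator hA.compl]
    congr with x
    by_cases hx : x ∈ A <;> simp_all [snoc_forall_notMem_iff]
  · rw [Set.indicator_of_notMem hq]
    simp_all [snoc_forall_notMem_iff]

lemma setLIntegral_iterK [IsSFiniteKernel κ] (hA : MeasurableSet A) (k : ℕ) {f : S → ℝ≥0∞}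
    (hf : Measurable f) (s : S) :
    ∫⁻ p in {p : Fin (k + 1) → S | ∀ i, p i ∉ A}, f (p (Fin.last k)) ∂iterK κ k s
      = (tabooOp κ A)^[k + 1] f s := by
  induction k generalizing f with
  | zero =>
    have hconst : Measurable fun (x : S) (_ : Fin 1) => x :=
      measurable_pi_lambda _ fun _ => measurable_id
    rw [iterK, Measure.restrict_map hconst (measurableSet_forall_notMem hA),
      lintegral_map (f := fun p : Fin (0 + 1) → S => f (p (Fin.last 0))) (by fun_prop) hconst]
    simp [tabooOp, Set.compl_def]
  | succ k ih =>
    rw [iterK, ← lintegral_indicator (measurableSet_forall_notMem hA),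
      Measure.lintegral_bind (measurable_map_snoc k).aemeasurable
        (measurable_indicator_forall_notMem hA hf _).aemeasurable]
    simp_rw [lintegral_map_snoc_indicator hA hf]
    rw [lintegral_indicator (measurableSet_forall_notMem hA), ih (measurable_tabooOp hA hf),
      ← Function.iterate_succ_apply]

lemma iterK_apply_forall_notMem [IsSFiniteKernel κ] (hA : MeasurableSet A) (k : ℕ) (s : S) :
    iterK κ k s {p | ∀ i, p i ∉ A} = avoidProb κ A k s := by
  have := setLIntegral_iterK (κ := κ) hA k (measurable_const (a := (1 : ℝ≥0∞))) s
  rwa [setLIntegral_one] at this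

end Avoidance

section Avoids

variable {Ω S : Type*} (Sp : ℕ → Ω → S) (A : Set S)

def avoidsOn (I : Set ℕ) : Set Ω := {ω | ∀ j ∈ I, Sp j ω ∉ A}

variable {Sp A}

lemma avoidsOn_antitone : Antitone (avoidsOn Sp A) :=
  fun _ _ hIJ _ hω j hj => hω j (hIJ hj)

lemma avoidsOn_insert (j : ℕ) (I : Set ℕ) :
    avoidsOn Sp A (insert j I) = Sp j ⁻¹' Aᶜ ∩ avoidsOn Sp A I := by
  ext ω; simp [avoidsOn]

lemma avoidsOn_singleton (j : ℕ) : avoidsOn Sp A {j} = Sp j ⁻¹' Aᶜ := by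
  ext ω; simp [avoidsOn]

lemma avoidsOn_iUnion {ι : Sort*} (I : ι → Set ℕ) :
    avoidsOn Sp A (⋃ i, I i) = ⋂ i, avoidsOn Sp A (I i) := by
  ext ω; simp only [avoidsOn, Set.mem_iUnion, Set.mem_iInter, Set.mem_ofPred_eq]; grind

lemma avoidsOn_Ioi (n : ℕ) :
    avoidsOn Sp A (Set.Ioi n) = ⋂ k, ⋂ (_ : n ≤ k), {ω | Sp (k + 1) ω ∉ A} := by
  ext ω
  simp only [avoidsOn, Set.mem_Ioi, Set.mem_iInter, Set.mem_ofPred_eq]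
  refine ⟨fun h k hk => h (k + 1) (by omega), fun h j hj => ?_⟩
  obtain ⟨k, rfl⟩ : ∃ k, j = k + 1 := ⟨j - 1, by omega⟩
  exact h k (by omega)

lemma measurableSet_avoidsOn [MeasurableSpace S] {m : MeasurableSpace Ω} (hA : MeasurableSet A)
    {I : Set ℕ} (hSp : ∀ j ∈ I, Measurable[m] (Sp j)) : MeasurableSet[m] (avoidsOn Sp A I) := by
  have : avoidsOn Sp A I = ⋂ j ∈ I, Sp j ⁻¹' Aᶜ := by ext; simp [avoidsOn]
  exact this ▸ .biInter I.to_countable fun j hj => hSp j hj hA.compl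

end Avoids

namespace IsMarkovChain

variable {Ω S : Type*} [MeasurableSpace Ω] [MeasurableSpace S] {Pr : Measure Ω} {κ : Kernel S S}
  {Sp : ℕ → Ω → S} {A : Set S}

def filtration (hM : IsMarkovChain Pr κ Sp) : Filtration ℕ ‹MeasurableSpace Ω› where
  seq n := ⨆ i : Fin (n + 1), MeasurableSpace.comap (Sp i) inferInstance
  mono' _ _ hmn := iSup_le fun i => le_iSup_of_le (Fin.castLE (by omega) i) le_rfl
  le' _ := iSup_le fun i => (hM.1 i).comap_le

variable (hM : IsMarkovChain Pr κ Sp)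
include hM

lemma measurable_filtration {j n : ℕ} (h : j ≤ n) : Measurable[hM.filtration n] (Sp j) :=
  measurable_iff_comap_le.2 (le_iSup_of_le (⟨j, by omega⟩ : Fin (n + 1)) le_rfl)

lemma map_restrict_succ {n : ℕ} {B : Set Ω} (hB : MeasurableSet[hM.filtration n] B) :
    (Pr.restrict B).map (Sp (n + 1)) = κ ∘ₘ (Pr.restrict B).map (Sp n) := by
  ext t ht
  rw [Measure.map_apply (hM.1 _) ht, Measure.restrict_apply (hM.1 _ ht), Set.inter_comm,
    hM.2 n t ht B hB, Measure.bind_apply ht κ.aemeasurable,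
    lintegral_map (κ.measurable_coe ht) (hM.1 n)]

lemma setLIntegral_comp_succ {n : ℕ} {B : Set Ω} (hB : MeasurableSet[hM.filtration n] B)
    {g : S → ℝ≥0∞} (hg : Measurable g) :
    ∫⁻ ω in B, g (Sp (n + 1) ω) ∂Pr = ∫⁻ ω in B, ∫⁻ x, g x ∂κ (Sp n ω) ∂Pr := by
  rw [← lintegral_map hg (hM.1 _), hM.map_restrict_succ hB,
    Measure.lintegral_bind κ.aemeasurable hg.aemeasurable,
    lintegral_map hg.lintegral_kernel (hM.1 n)]

lemma setLIntegral_inter_preimage_compl [IsSFiniteKernel κ] (hA : MeasurableSet A) {n : ℕ}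
    {B : Set Ω} (hB : MeasurableSet[hM.filtration n] B) {f : S → ℝ≥0∞} (hf : Measurable f) :
    ∫⁻ ω in B ∩ Sp (n + 1) ⁻¹' Aᶜ, f (Sp (n + 1) ω) ∂Pr
      = ∫⁻ ω in B, tabooOp κ A f (Sp n ω) ∂Pr := by
  have hpre : MeasurableSet (Sp (n + 1) ⁻¹' Aᶜ) := hM.1 _ hA.compl
  rw [Set.inter_comm, ← Measure.restrict_restrict hpre, ← lintegral_indicator hpre]
  simp_rw [← Function.comp_apply (f := f), Set.indicator_comp_right]
  rw [hM.setLIntegral_comp_succ hB (hf.indicator hA.compl)]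
  simp_rw [lintegral_indicator hA.compl]
  rfl

lemma measure_inter_avoidsOn_Ioc [IsSFiniteKernel κ] (hA : MeasurableSet A) (k : ℕ) {n : ℕ}
    {B : Set Ω} (hB : MeasurableSet[hM.filtration n] B) :
    Pr (B ∩ avoidsOn Sp A (Set.Ioc n (n + k + 1)))
      = ∫⁻ ω in B, avoidProb κ A k (Sp n ω) ∂Pr := by
  induction k generalizing n B with
  | zero =>
    have hIoc : Set.Ioc n (n + 0 + 1) = {n + 1} := by
      ext j; simp only [Set.mem_Ioc, Set.mem_singleton_iff]; omega
    rw [hIoc, avoidsOn_singleton, hM.2 n _ hA.compl B hB]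
    simp only [avoidProb_zero, tabooOp_one_apply]
  | succ k ih =>
    have hIoc :
        Set.Ioc n (n + (k + 1) + 1) = insert (n + 1) (Set.Ioc (n + 1) (n + 1 + k + 1)) := by
      ext j; simp; omega
    have hB' : MeasurableSet[hM.filtration (n + 1)] (B ∩ Sp (n + 1) ⁻¹' Aᶜ) :=
      (hM.filtration.mono n.le_succ _ hB).inter (hM.measurable_filtration le_rfl hA.compl)
    rw [hIoc, avoidsOn_insert, ← Set.inter_assoc, ih hB',
      hM.setLIntegral_inter_preimage_compl hA hB (measurable_avoidProb hA k), avoidProb_succ]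

lemma setLIntegral_iInf_avoidProb [IsFiniteMeasure Pr] [IsMarkovKernel κ] (hA : MeasurableSet A)
    {n : ℕ} {B : Set Ω} (hB : MeasurableSet[hM.filtration n] B) :
    ∫⁻ ω in B, ⨅ k, avoidProb κ A k (Sp n ω) ∂Pr = Pr (B ∩ avoidsOn Sp A (Set.Ioi n)) := by
  have hIoi : Set.Ioi n = ⋃ k, Set.Ioc n (n + k + 1) := by
    ext j
    simp only [Set.mem_Ioi, Set.mem_iUnion, Set.mem_Ioc]
    exact ⟨fun h => ⟨j, h, by omega⟩, fun ⟨_, h, _⟩ => h⟩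
  have hfin : ∫⁻ ω in B, avoidProb κ A 0 (Sp n ω) ∂Pr ≠ ∞ :=
    ne_top_of_le_ne_top (measure_ne_top Pr B)
      ((lintegral_mono fun ω => avoidProb_le_one 0 (Sp n ω)).trans (setLIntegral_one B).le)
  have hanti : Antitone fun k => B ∩ avoidsOn Sp A (Set.Ioc n (n + k + 1)) := fun k l hkl =>
    Set.inter_subset_inter_right B (avoidsOn_antitone (Set.Ioc_subset_Ioc_right (by omega)))
  have hmeas : ∀ k, NullMeasurableSet (B ∩ avoidsOn Sp A (Set.Ioc n (n + k + 1))) Pr := fun k =>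
    ((hM.filtration.le n _ hB).inter
      (measurableSet_avoidsOn hA fun j _ => hM.1 j)).nullMeasurableSet
  rw [lintegral_iInf (f := fun k ω => avoidProb κ A k (Sp n ω))
      (fun k => (measurable_avoidProb hA k).comp (hM.1 n))
      (fun k l hkl ω => antitone_avoidProb hkl _) hfin, hIoi, avoidsOn_iUnion, Set.inter_iInter,
    hanti.measure_iInter hmeas ⟨0, measure_ne_top _ _⟩]
  simp_rw [hM.measure_inter_avoidsOn_Ioc hA _ hB]

lemma ofReal_condExp_avoidsOn_Ioi [IsFiniteMeasure Pr] [IsMarkovKernel κ] (hA : MeasurableSet A)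
    (n : ℕ) :
    (fun ω => ENNReal.ofReal (Pr[(avoidsOn Sp A (Set.Ioi n)).indicator (1 : Ω → ℝ) |
      hM.filtration n] ω)) =ᵐ[Pr] fun ω => ⨅ k, avoidProb κ A k (Sp n ω) :=
  ofReal_condExp_indicator_ae_eq (hM.filtration.le n)
    (measurableSet_avoidsOn hA fun j _ => hM.1 j)
    ((Measurable.iInf fun k => measurable_avoidProb hA k).comp (hM.measurable_filtration le_rfl))
    fun _ hB => hM.setLIntegral_iInf_avoidProb hA hB

end IsMarkovChain

theorem statement9_general {S : Type*} [MeasurableSpace S]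
    {Ω : Type*} [MeasurableSpace Ω] (Pr : Measure Ω) [IsProbabilityMeasure Pr]
    (κ : Kernel S S) [IsMarkovKernel κ]
    (Sp : ℕ → Ω → S) (hMarkov : IsMarkovChain Pr κ Sp)
    (A : Set S) (hA : MeasurableSet A) :
    ∀ᵐ ω ∂Pr, Tendsto
      (fun n => ⨅ k : ℕ, iterK κ k (Sp n ω) {p : Fin (k + 1) → S | ∀ i, p i ∉ A})
      atTop
      (nhds (Set.indicator (⋃ m : ℕ, ⋂ k : ℕ, ⋂ _ : m ≤ k, {ω' : Ω | Sp (k + 1) ω' ∉ A})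
        (fun _ => (1 : ENNReal)) ω)) := by
  have hlevy := tendsto_condExp_indicator_of_monotone (μ := Pr) hMarkov.filtration
    (E := fun n => avoidsOn Sp A (Set.Ioi n))
    (fun m n hmn => avoidsOn_antitone (Set.Ioi_subset_Ioi hmn))
    (fun n => measurableSet_avoidsOn hA fun j _ =>
      (hMarkov.measurable_filtration le_rfl).mono
        (le_iSup (fun n => hMarkov.filtration n) j) le_rfl)
  filter_upwards [hlevy, ae_all_iff.2 (hMarkov.ofReal_condExp_avoidsOn_Ioi hA)] with ω hω hY
  simp_rw [iterK_apply_forall_notMem hA, ← hY, ← avoidsOn_Ioi]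
  convert (ENNReal.continuous_ofReal.tendsto _).comp hω using 2
  · rfl
  · by_cases h : ω ∈ ⋃ n, avoidsOn Sp A (Set.Ioi n) <;> simp [h]

/-- For a time-homogeneous Markov process `(S_n)` with transition
function `κ` on a metrizable second-countable space and a Borel set `A`, the sequence
`inf_{k ≥ 1} P^k_{S_n}((𝒮 ∖ A)^k)` converges almost surely to the indicator of the event
that the process eventually never enters `A`. -/
theorem statement9 {S : Type*} [TopologicalSpace S] [TopologicalSpace.MetrizableSpace S]
    [SecondCountableTopology S] [MeasurableSpace S] [BorelSpace S]
    {Ω : Type*} [MeasurableSpace Ω] (Pr : Measure Ω) [IsProbabilityMeasure Pr]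
    (κ : Kernel S S) [IsMarkovKernel κ]
    (Sp : ℕ → Ω → S) (hMarkov : IsMarkovChain Pr κ Sp)
    (A : Set S) (hA : MeasurableSet A) :
    ∀ᵐ ω ∂Pr, Tendsto
      (fun n => ⨅ k : ℕ, iterK κ k (Sp n ω) {p : Fin (k + 1) → S | ∀ i, p i ∉ A})
      atTop
      (nhds (Set.indicator (⋃ m : ℕ, ⋂ k : ℕ, ⋂ _ : m ≤ k, {ω' : Ω | Sp (k + 1) ω' ∉ A})
        (fun _ => (1 : ENNReal)) ω)) :=
  statement9_general Pr κ Sp hMarkov A hA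
end
end

section
/- Let (Z_n)_{n≥1} be a sequence of independent identically distributed real random variables with density ρ, and define W_1 = max(Z_1,0) and W_{n+1} = max(W_n + Z_{n+1}, 0). If ρ is strictly positive almost everywhere on ℝ (support(ρ) = ℝ), ∫_ℝ s ρ(s) ds < 0, and inf_{[-δ,δ]} ρ > 0 for some δ > 0, then (W_n)_{n≥1} is a nonevanescent time-homogeneous Markov process on [0,∞) whose transition function P, given by P_s(A) = ∫_{A∖{0}} ρ(x−s) dx + (∫_{(-∞,-s]} ρ) · δ_0(A), is strong Feller continuous, and for every s ∈ [0,∞) and every nonempty open set O ⊆ [0,∞), Σ_{n≥1} P^n_s((0,∞)^{n-1} × O) > 0. -/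
/-!
The walk is `W (n + 1) = φ (W n) (Z (n + 1))` with `φ s z = (s + z)⁺`, so `κ s` is the law of
`(s + Z)⁺`, and the Markov property comes from the independence of `Z (n + 1)` from
`(Z 0, …, Z n)`, of which `W 0, …, W n` are measurable functions. Integrating a bounded `f`
against `κ s` is a convolution of `f ∘ toNNReal` with the integrable density, which is continuous
because the density is an `L¹`-limit of continuous compactly supported functions. By the strong law
of large numbers the partial sums of `Z` drift to `-∞`; as long as `W` stays positive it moves like
these partial sums, so it returns to `0` infinitely often and `K = {0}` witnesses nonevanescence.
Since `ρ > 0` a.e., `κ s` charges every nonempty open set, so already the first term of the series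
is positive.
-/

open MeasureTheory ProbabilityTheory Filter Topology NNReal

noncomputable section

open scoped Convolution

section Convolution

variable {G : Type*} [NormedAddCommGroup G] [MeasurableSpace G] [BorelSpace G]
  {μ : Measure G} [μ.IsAddLeftInvariant] [μ.IsNegInvariant] {h : G → ℝ} {C : ℝ}

theorem abs_convolution_sub_convolution_le (hh : AEStronglyMeasurable h μ) (hC : ∀ t, |h t| ≤ C)
    {d e : G → ℝ} (hd : Integrable d μ) (he : Integrable e μ) (y : G) :
    |(h ⋆[ContinuousLinearMap.mul ℝ ℝ, μ] d) y - (h ⋆[ContinuousLinearMap.mul ℝ ℝ, μ] e) y| ≤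
      C * ∫ t, |d t - e t| ∂μ := by
  have hbdd : ∀ᵐ t ∂μ, ‖h t‖ ≤ C := Eventually.of_forall hC
  rw [convolution_mul, convolution_mul,
    ← integral_sub ((hd.comp_sub_left y).bdd_mul hh hbdd) ((he.comp_sub_left y).bdd_mul hh hbdd),
    ← integral_sub_left_eq_self (fun t => |d t - e t|) μ y, ← integral_const_mul,
    ← Real.norm_eq_abs]
  refine norm_integral_le_of_norm_le (g := fun t => C * |d (y - t) - e (y - t)|)
    (((hd.sub he).abs.comp_sub_left y).const_mul C) (Eventually.of_forall fun t => ?_)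
  rw [← mul_sub, Real.norm_eq_abs, abs_mul]
  exact mul_le_mul_of_nonneg_right (hC t) (abs_nonneg _)

theorem continuous_convolution_of_bounded_of_integrable [LocallyCompactSpace G] [μ.Regular]
    (hh : AEStronglyMeasurable h μ) (hC : ∀ t, |h t| ≤ C) {d : G → ℝ} (hd : Integrable d μ) :
    Continuous (h ⋆[ContinuousLinearMap.mul ℝ ℝ, μ] d) := by
  have hloc : LocallyIntegrable h μ :=
    (locallyIntegrable_const C).mono hh
      (Eventually.of_forall fun t => by simpa using (hC t).trans (le_abs_self C))
  refine continuous_of_uniform_approx_of_continuous fun u hu => ?_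
  obtain ⟨ε, hε, hεu⟩ := Metric.mem_uniformity_dist.mp hu
  obtain ⟨g, hg_supp, hg_approx, hg_cont, hg_int⟩ :=
    hd.exists_hasCompactSupport_integral_sub_le (ε := ε / (|C| + 1)) (by positivity)
  refine ⟨_, hg_supp.continuous_convolution_right (ContinuousLinearMap.mul ℝ ℝ) hloc hg_cont,
    fun y => hεu ?_⟩
  rw [Real.dist_eq]
  calc _ ≤ C * ∫ t, |d t - g t| ∂μ := abs_convolution_sub_convolution_le hh hC hd hg_int y
    _ ≤ |C| * (ε / (|C| + 1)) := by
        refine (le_abs_self _).trans ?_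
        rw [abs_mul, abs_of_nonneg (integral_nonneg fun t => abs_nonneg _)]
        gcongr
        simpa using hg_approx
    _ < ε := by
        rw [mul_div_assoc', div_lt_iff₀ (by positivity)]
        nlinarith

end Convolution

section Independence

variable {Ω α β γ : Type*} [MeasurableSpace Ω] [MeasurableSpace α] [MeasurableSpace β]
  [MeasurableSpace γ] {μ : Measure Ω} [IsFiniteMeasure μ]

theorem ProbabilityTheory.IndepFun.measure_inter_preimage_eq_setLIntegral {X : Ω → α}
    {Y : Ω → β} (hXY : IndepFun X Y μ) (hX : Measurable X) (hY : Measurable Y) {g : α → β → γ}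
    (hg : Measurable (Function.uncurry g)) {B : Set α} (hB : MeasurableSet B) {A : Set γ}
    (hA : MeasurableSet A) :
    μ (X ⁻¹' B ∩ (fun ω => g (X ω) (Y ω)) ⁻¹' A) =
      ∫⁻ ω in X ⁻¹' B, μ.map Y (g (X ω) ⁻¹' A) ∂μ := by
  set C : Set (α × β) := Prod.fst ⁻¹' B ∩ Function.uncurry g ⁻¹' A
  have hC : MeasurableSet C := (measurable_fst hB).inter (hg hA)
  have hslice : ∀ x, μ.map Y (Prod.mk x ⁻¹' C) = B.indicator (fun x => μ.map Y (g x ⁻¹' A)) x := by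
    intro x
    by_cases hx : x ∈ B <;> simp [C, hx, Set.preimage]
  have hmeas : Measurable fun x => μ.map Y (g x ⁻¹' A) :=
    measurable_measure_prodMk_left (hg hA)
  calc μ (X ⁻¹' B ∩ (fun ω => g (X ω) (Y ω)) ⁻¹' A)
      = μ.map (fun ω => (X ω, Y ω)) C := (Measure.map_apply (hX.prodMk hY) hC).symm
    _ = ∫⁻ x in B, μ.map Y (g x ⁻¹' A) ∂(μ.map X) := by
        rw [(indepFun_iff_map_prod_eq_prod_map_map hX.aemeasurable hY.aemeasurable).mp hXY,
          Measure.prod_apply hC, lintegral_congr hslice, lintegral_indicator hB]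
    _ = _ := setLIntegral_map hB hmeas hX

end Independence

section MarkovChain

variable {Ω S E : Type*} [MeasurableSpace S] [MeasurableSpace E] {Z : ℕ → Ω → E}
  {φ : S → E → S} {ψ : E → S} {W : ℕ → Ω → S}

theorem measurable_comap_history_of_recursion (hφ : Measurable (Function.uncurry φ))
    (hψ : Measurable ψ) (hW0 : ∀ ω, W 0 ω = ψ (Z 0 ω))
    (hWrec : ∀ n ω, W (n + 1) ω = φ (W n ω) (Z (n + 1) ω)) {n i : ℕ} (hi : i ≤ n) :
    Measurable[MeasurableSpace.comap (fun ω (j : Finset.range (n + 1)) => Z j ω) inferInstance]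
      (W i) := by
  have hZ : ∀ j ≤ n, Measurable[MeasurableSpace.comap
      (fun ω (j : Finset.range (n + 1)) => Z j ω) inferInstance] (Z j) := fun j hj =>
    (measurable_pi_apply (⟨j, Finset.mem_range.mpr (by omega)⟩ : Finset.range (n + 1))).comp
      (comap_measurable fun ω (j : Finset.range (n + 1)) => Z j ω)
  induction i with
  | zero =>
    rw [funext hW0]
    exact hψ.comp (hZ 0 hi)
  | succ i ih =>
    rw [funext (hWrec i)]
    exact hφ.comp ((ih (by omega)).prodMk (hZ _ hi))

theorem isMarkovChain_of_recursion [StandardBorelSpace S] [Nonempty S] [MeasurableSpace Ω]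
    {Pr : Measure Ω} [IsFiniteMeasure Pr]
    (hZ : ∀ n, Measurable (Z n)) (hindep : iIndepFun Z Pr)
    (hφ : Measurable (Function.uncurry φ)) (hψ : Measurable ψ) (hW0 : ∀ ω, W 0 ω = ψ (Z 0 ω))
    (hWrec : ∀ n ω, W (n + 1) ω = φ (W n ω) (Z (n + 1) ω)) {κ : Kernel S S}
    (hκ : ∀ n s, (Pr.map (Z (n + 1))).map (φ s) = κ s) :
    IsMarkovChain Pr κ W := by
  have hhist : ∀ n, Measurable fun ω (j : Finset.range (n + 1)) => Z j ω := fun n =>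
    measurable_pi_lambda _ fun j => hZ j
  have hWhist := fun n i (hi : i ≤ n) => measurable_comap_history_of_recursion hφ hψ hW0 hWrec hi
  refine ⟨fun n => (hWhist n n le_rfl).mono (hhist n).comap_le le_rfl, fun n A hA B hB => ?_⟩
  have hle : (⨆ i : Fin (n + 1), MeasurableSpace.comap (W i) inferInstance) ≤
      MeasurableSpace.comap (fun ω (j : Finset.range (n + 1)) => Z j ω) inferInstance :=
    iSup_le fun i => (hWhist n i (Nat.lt_succ_iff.mp i.isLt)).comap_le
  obtain ⟨B', hB', rfl⟩ := hle B hB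
  -- Doob–Dynkin: `W n` is a measurable function `V` of the history `(Z 0, …, Z n)`
  obtain ⟨V, hV, hWV⟩ := (hWhist n n le_rfl).exists_eq_measurable_comp
  have hindep' : IndepFun (fun ω (j : Finset.range (n + 1)) => Z j ω) (Z (n + 1)) Pr :=
    (hindep.indepFun_finset _ {n + 1} (by simp) hZ).comp measurable_id
      (measurable_pi_apply ⟨n + 1, Finset.mem_singleton_self _⟩)
  have hWsucc : W (n + 1) = fun ω => φ (V fun j => Z j ω) (Z (n + 1) ω) := by
    ext ω
    rw [hWrec, hWV]
    rfl
  rw [hWsucc, hindep'.measure_inter_preimage_eq_setLIntegral (hhist n) (hZ _)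
    (g := fun p z => φ (V p) z) (hφ.comp (hV.prodMap measurable_id)) hB' hA]
  refine setLIntegral_congr_fun ((hhist n) hB') fun ω _ => ?_
  rw [hWV, ← hκ n, Measure.map_apply hφ.of_uncurry_left hA]
  rfl

end MarkovChain

section ReflectedWalk

theorem frequently_eq_zero_of_tendsto_sum_atBot {w : ℕ → ℝ≥0} {z : ℕ → ℝ}
    (hw : ∀ n, (w (n + 1) : ℝ) = max (w n + z (n + 1)) 0)
    (hz : Tendsto (fun n => ∑ i ∈ Finset.range n, z i) atTop atBot) :
    ∃ᶠ n in atTop, w n = 0 := by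
  set S := fun n => ∑ i ∈ Finset.range n, z i
  intro hne
  obtain ⟨m, hm⟩ := eventually_atTop.mp hne
  -- away from `0` the reflection is inactive, so `w` moves like the free walk
  have hfree : ∀ n ≥ m, (w n : ℝ) = w m + (S (n + 1) - S (m + 1)) := by
    intro n hn
    induction n, hn using Nat.le_induction with
    | base => simp
    | succ n hmn ih =>
      have hpos : (0 : ℝ) < w (n + 1) := NNReal.coe_pos.mpr (pos_iff_ne_zero.mpr (hm _ (by omega)))
      have hactive : 0 ≤ (w n : ℝ) + z (n + 1) := by
        by_contra! h
        rw [hw, max_eq_right h.le] at hpos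
        exact lt_irrefl 0 hpos
      rw [hw, max_eq_left hactive, ih]
      simp only [S, Finset.sum_range_succ _ (n + 1)]
      ring
  obtain ⟨n, hlow, hn⟩ := ((hz.comp (tendsto_add_atTop_nat 1)).eventually
    (eventually_lt_atBot (S (m + 1) - w m))).and (eventually_ge_atTop m) |>.exists
  have := hfree n hn
  have := (w n).coe_nonneg
  simp only [Function.comp_apply] at hlow
  linarith

theorem tendsto_atBot_of_tendsto_inv_smul {S : ℕ → ℝ} {c : ℝ} (hc : c < 0)
    (h : Tendsto (fun n : ℕ => (n : ℝ)⁻¹ • S n) atTop (𝓝 c)) : Tendsto S atTop atBot := by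
  refine (tendsto_natCast_atTop_atTop.atTop_mul_neg hc h).congr' ?_
  filter_upwards [eventually_ne_atTop 0] with n hn
  rw [smul_eq_mul, ← mul_assoc, mul_inv_cancel₀ (Nat.cast_ne_zero.mpr hn), one_mul]

theorem ae_frequently_eq_zero_of_integral_neg {Ω : Type*} [MeasurableSpace Ω] {Pr : Measure Ω}
    {Z : ℕ → Ω → ℝ} (hindep : iIndepFun Z Pr) (hident : ∀ n, IdentDistrib (Z n) (Z 0) Pr Pr)
    (hint : Integrable (Z 0) Pr) (hneg : Pr[Z 0] < 0) {W : ℕ → Ω → ℝ≥0}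
    (hWrec : ∀ n ω, (W (n + 1) ω : ℝ) = max ((W n ω : ℝ) + Z (n + 1) ω) 0) :
    ∀ᵐ ω ∂Pr, ∃ᶠ n in atTop, W n ω = 0 := by
  filter_upwards [strong_law_ae Z hint (fun _ _ hij => hindep.indepFun hij) hident] with ω hω
  exact frequently_eq_zero_of_tendsto_sum_atBot (hWrec · ω)
    (tendsto_atBot_of_tendsto_inv_smul hneg hω)

end ReflectedWalk

section Density

variable {α : Type*} [MeasurableSpace α] {μ : Measure α} {ρ : α → ℝ}

theorem integral_withDensity_ofReal (hρ : Measurable ρ) (hρpos : 0 ≤ ρ) (g : α → ℝ) :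
    ∫ x, g x ∂(μ.withDensity fun x => ENNReal.ofReal (ρ x)) = ∫ x, ρ x * g x ∂μ := by
  rw [integral_withDensity_eq_integral_toReal_smul hρ.ennreal_ofReal
    (Eventually.of_forall fun _ => ENNReal.ofReal_lt_top)]
  simp only [ENNReal.toReal_ofReal (hρpos _), smul_eq_mul]

theorem integrable_withDensity_ofReal_iff (hρ : Measurable ρ) (hρpos : 0 ≤ ρ) {g : α → ℝ} :
    Integrable g (μ.withDensity fun x => ENNReal.ofReal (ρ x)) ↔
      Integrable (fun x => ρ x * g x) μ := by
  rw [integrable_withDensity_iff_integrable_smul' hρ.ennreal_ofReal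
    (Eventually.of_forall fun _ => ENNReal.ofReal_lt_top)]
  simp only [ENNReal.toReal_ofReal (hρpos _), smul_eq_mul]

variable {Ω : Type*} [MeasurableSpace Ω] {Pr : Measure Ω} {ρ : ℝ → ℝ} {X : Ω → ℝ}

theorem integral_eq_of_map_eq_withDensity (hX : Measurable X) (hρ : Measurable ρ) (hρpos : 0 ≤ ρ)
    (hmap : Pr.map X = volume.withDensity fun x => ENNReal.ofReal (ρ x)) :
    Pr[X] = ∫ x, x * ρ x := by
  rw [← integral_map (f := fun x => x) hX.aemeasurable aestronglyMeasurable_id, hmap,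
    integral_withDensity_ofReal hρ hρpos]
  simp only [mul_comm]

theorem integrable_of_map_eq_withDensity (hX : Measurable X) (hρ : Measurable ρ) (hρpos : 0 ≤ ρ)
    (hmap : Pr.map X = volume.withDensity fun x => ENNReal.ofReal (ρ x))
    (hint : Integrable (fun x => x * ρ x)) : Integrable X Pr := by
  rw [← Function.id_comp X, ← integrable_map_measure aestronglyMeasurable_id hX.aemeasurable, hmap,
    integrable_withDensity_ofReal_iff hρ hρpos]
  simpa only [id, mul_comm] using hint

theorem integrable_density_of_map_eq_withDensity [IsProbabilityMeasure Pr] (hX : Measurable X)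
    (hρ : Measurable ρ) (hρpos : 0 ≤ ρ)
    (hmap : Pr.map X = volume.withDensity fun x => ENNReal.ofReal (ρ x)) : Integrable ρ := by
  have := Measure.isProbabilityMeasure_map (μ := Pr) hX.aemeasurable
  rw [hmap] at this
  simpa using (integrable_withDensity_ofReal_iff hρ hρpos (g := fun _ => 1)).mp
    (integrable_const 1)

end Density

section ReflectedKernel

variable {ρ : ℝ → ℝ} {κ : Kernel ℝ≥0 ℝ≥0}

theorem image_coe_diff_zero (A : Set ℝ≥0) :
    ((↑) : ℝ≥0 → ℝ) '' (A \ {0}) = {x : ℝ | 0 < x ∧ x.toNNReal ∈ A} := by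
  ext x
  constructor
  · rintro ⟨a, ⟨haA, ha0⟩, rfl⟩
    exact ⟨NNReal.coe_pos.mpr (pos_iff_ne_zero.mpr ha0), by simpa using haA⟩
  · rintro ⟨hx, hA⟩
    exact ⟨x.toNNReal, ⟨hA, by simpa using hx⟩, Real.coe_toNNReal x hx.le⟩

theorem map_toNNReal_add_eq_of_apply_eq (hρ : Measurable ρ)
    (hκ : ∀ (s : ℝ≥0) (A : Set ℝ≥0), MeasurableSet A →
      κ s A = (∫⁻ x in (((↑) : ℝ≥0 → ℝ) '' (A \ {0})), ENNReal.ofReal (ρ (x - s))) +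
        (∫⁻ x in Set.Iic (-(s : ℝ)), ENNReal.ofReal (ρ x)) *
          A.indicator (fun _ => (1 : ENNReal)) 0) (s : ℝ≥0) :
    (volume.withDensity fun x => ENNReal.ofReal (ρ x)).map (fun z => ((s : ℝ) + z).toNNReal) =
      κ s := by
  have hmeas : Measurable fun z : ℝ => ((s : ℝ) + z).toNNReal := by fun_prop
  ext A hA
  set E := ((↑) : ℝ≥0 → ℝ) '' (A \ {0})
  have hE : MeasurableSet E := by
    simp only [E, image_coe_diff_zero]
    exact measurableSet_Ioi.inter (measurable_real_toNNReal hA)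
  have hshift : ∫⁻ z in (fun z => (s : ℝ) + z) ⁻¹' E, ENNReal.ofReal (ρ z) =
      ∫⁻ x in E, ENNReal.ofReal (ρ (x - s)) := by
    simpa using (measurePreserving_add_left volume (s : ℝ)).setLIntegral_comp_preimage hE
      (f := fun x => ENNReal.ofReal (ρ (x - s))) (by fun_prop)
  have hsplit : (fun z => ((s : ℝ) + z).toNNReal) ⁻¹' A =
      (fun z => (s : ℝ) + z) ⁻¹' E ∪ {z | z ≤ -s ∧ (0 : ℝ≥0) ∈ A} := by
    ext z
    simp only [E, image_coe_diff_zero, Set.mem_preimage, Set.mem_union, Set.mem_ofPred_eq]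
    rcases lt_or_ge 0 ((s : ℝ) + z) with hz | hz
    · simp [hz, show ¬ z ≤ -s by linarith]
    · simp [Real.toNNReal_of_nonpos hz, hz.not_gt, show z ≤ -s by linarith]
  have hdisj : Disjoint ((fun z => (s : ℝ) + z) ⁻¹' E) {z | z ≤ -s ∧ (0 : ℝ≥0) ∈ A} := by
    refine Set.disjoint_left.mpr fun z hzE hz => ?_
    simp only [E, image_coe_diff_zero, Set.mem_preimage, Set.mem_ofPred_eq] at hzE hz
    linarith [hzE.1, hz.1]
  have hIic : MeasurableSet {z : ℝ | z ≤ -s ∧ (0 : ℝ≥0) ∈ A} :=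
    measurableSet_Iic.inter (.const _)
  rw [Measure.map_apply hmeas hA, withDensity_apply _ (hmeas hA), hsplit,
    lintegral_union hIic hdisj, hshift, hκ s A hA]
  by_cases h0 : (0 : ℝ≥0) ∈ A
  · simp [E, h0, Set.Iic]
  · simp [E, h0]

variable (hρ : Measurable ρ)
  (hκ : ∀ s : ℝ≥0,
    (volume.withDensity fun x => ENNReal.ofReal (ρ x)).map (fun z => ((s : ℝ) + z).toNNReal) = κ s)
include hρ hκ

theorem integral_eq_convolution_of_map_eq (hρpos : 0 ≤ ρ) {f : ℝ≥0 → ℝ} (hf : Measurable f)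
    (s : ℝ≥0) :
    ∫ x, f x ∂(κ s) =
      ((fun t => f t.toNNReal) ⋆[ContinuousLinearMap.mul ℝ ℝ, volume] fun t => ρ (-t)) s := by
  rw [← hκ s, integral_map (by fun_prop)
    hf.aestronglyMeasurable, integral_withDensity_ofReal hρ hρpos, convolution_mul]
  conv_rhs => rw [← integral_add_left_eq_self _ (s : ℝ)]
  simp only [sub_add_cancel_left, neg_neg, mul_comm]

theorem continuous_integral_of_map_eq (hρpos : 0 ≤ ρ) (hρint : Integrable ρ) {f : ℝ≥0 → ℝ}
    (hf : Measurable f) {C : ℝ} (hC : ∀ x, |f x| ≤ C) :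
    Continuous fun s => ∫ x, f x ∂(κ s) := by
  simp_rw [integral_eq_convolution_of_map_eq hρ hκ hρpos hf]
  exact (continuous_convolution_of_bounded_of_integrable
    (hf.comp measurable_real_toNNReal).aestronglyMeasurable (fun t => hC _) hρint.comp_neg).comp
    NNReal.continuous_coe

theorem apply_pos_of_map_eq (hsupp : ∀ᵐ x, 0 < ρ x) (s : ℝ≥0) {O : Set ℝ≥0} (hO : IsOpen O)
    (hne : O.Nonempty) : 0 < κ s O := by
  have hcont : Continuous fun z : ℝ => ((s : ℝ) + z).toNNReal := by fun_prop
  obtain ⟨a, ha⟩ := hne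
  have hpre : ((fun z : ℝ => ((s : ℝ) + z).toNNReal) ⁻¹' O).Nonempty :=
    ⟨a - s, by simpa using ha⟩
  have hac : volume ≪ volume.withDensity fun x => ENNReal.ofReal (ρ x) :=
    withDensity_absolutelyContinuous' hρ.ennreal_ofReal.aemeasurable
      (hsupp.mono fun x hx => (ENNReal.ofReal_pos.mpr hx).ne')
  rw [← hκ s, Measure.map_apply hcont.measurable hO.measurableSet]
  exact pos_iff_ne_zero.mpr fun h => (hO.preimage hcont).measure_ne_zero volume hpre (hac h)

end ReflectedKernel

theorem iterK_zero_apply {S : Type*} [MeasurableSpace S] (κ : Kernel S S) (s : S) {O : Set S}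
    (hO : MeasurableSet O) : iterK κ 0 s {p | p (Fin.last 0) ∈ O} = κ s O := by
  rw [iterK]
  exact Measure.map_apply (measurable_pi_lambda _ fun _ => measurable_id)
    (measurable_pi_apply (Fin.last 0) hO)

theorem statement17_general
    {Ω : Type*} [MeasurableSpace Ω] (Pr : Measure Ω) [IsProbabilityMeasure Pr]
    (Z : ℕ → Ω → ℝ) (hZmeas : ∀ n, Measurable (Z n))
    (hindep : iIndepFun Z Pr)
    (ρ : ℝ → ℝ) (hρmeas : Measurable ρ) (hρpos : 0 ≤ ρ)
    (hdens : ∀ n, Pr.map (Z n) = volume.withDensity fun x => ENNReal.ofReal (ρ x))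
    (hsupp : ∀ᵐ x ∂(volume : Measure ℝ), 0 < ρ x)
    (hmean : ∫ s, s * ρ s < 0)
    (W : ℕ → Ω → ℝ≥0)
    (hW0 : ∀ ω, (W 0 ω : ℝ) = max (Z 0 ω) 0)
    (hWrec : ∀ n ω, (W (n + 1) ω : ℝ) = max ((W n ω : ℝ) + Z (n + 1) ω) 0)
    (κ : Kernel ℝ≥0 ℝ≥0)
    (hκ : ∀ (s : ℝ≥0) (A : Set ℝ≥0), MeasurableSet A →
      κ s A = (∫⁻ x in (((↑) : ℝ≥0 → ℝ) '' (A \ {0})), ENNReal.ofReal (ρ (x - s))) +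
        (∫⁻ x in Set.Iic (-(s : ℝ)), ENNReal.ofReal (ρ x)) *
          A.indicator (fun _ => (1 : ENNReal)) 0) :
    -- `(W_n)` is a time-homogeneous Markov process with transition function `κ`
    IsMarkovChain Pr κ W ∧
    -- `(W_n)` is nonevanescent
    (∀ᵐ ω ∂Pr, ∃ K : Set ℝ≥0, IsCompact K ∧ ∀ m : ℕ, ∃ n ≥ m, W n ω ∈ K) ∧
    -- `κ` is strong Feller continuous
    (∀ f : ℝ≥0 → ℝ, Measurable f → (∃ C : ℝ, ∀ x, |f x| ≤ C) →
      Continuous fun s => ∫ x, f x ∂(κ s)) ∧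
    -- discrimination: every nonempty open set is reachable through `(0, ∞)`
    (∀ (s : ℝ≥0) (O : Set ℝ≥0), IsOpen O → O.Nonempty →
      0 < ∑' n : ℕ, iterK κ n s
        {p : Fin (n + 1) → ℝ≥0 |
          (∀ i : Fin (n + 1), (i : ℕ) < n → 0 < p i) ∧ p (Fin.last n) ∈ O}) := by
  have hker := map_toNNReal_add_eq_of_apply_eq hρmeas hκ
  have hρint := integrable_density_of_map_eq_withDensity (hZmeas 0) hρmeas hρpos (hdens 0)
  have hW : ∀ n ω, W (n + 1) ω = ((W n ω : ℝ) + Z (n + 1) ω).toNNReal := fun n ω =>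
    NNReal.coe_injective (by rw [hWrec, Real.coe_toNNReal'])
  refine ⟨?markov, ?nonevanescent, fun f hf ⟨C, hC⟩ =>
    continuous_integral_of_map_eq hρmeas hker hρpos hρint hf hC, fun s O hO hne => ?_⟩
  case markov =>
    refine isMarkovChain_of_recursion (φ := fun (s : ℝ≥0) z => ((s : ℝ) + z).toNNReal) hZmeas
      hindep (by fun_prop) measurable_real_toNNReal
      (fun ω => NNReal.coe_injective (by rw [hW0, Real.coe_toNNReal'])) hW
      fun n s => by rw [hdens, ← hker s]
  case nonevanescent =>
    have hint := Integrable.of_integral_ne_zero hmean.ne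
    filter_upwards [ae_frequently_eq_zero_of_integral_neg hindep
      (fun n => ⟨(hZmeas n).aemeasurable, (hZmeas 0).aemeasurable, by rw [hdens, hdens]⟩)
      (integrable_of_map_eq_withDensity (hZmeas 0) hρmeas hρpos (hdens 0) hint)
      (by rwa [integral_eq_of_map_eq_withDensity (hZmeas 0) hρmeas hρpos (hdens 0)]) hWrec]
      with ω hω
    exact ⟨{0}, isCompact_singleton, fun m => (frequently_atTop.mp hω) m⟩
  refine (apply_pos_of_map_eq hρmeas hker hsupp s hO hne).trans_le
    (le_trans (le_of_eq ?_) (ENNReal.le_tsum 0))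
  rw [← iterK_zero_apply κ s hO.measurableSet]
  simp

/-- (reflected random walk on `[0, ∞)`). For an i.i.d. sequence with an
almost everywhere positive density `ρ` of negative mean, bounded below away from `0` on
a neighbourhood of `0`, the reflected random walk `W_{n+1} = max(W_n + Z_{n+1}, 0)` is a
nonevanescent time-homogeneous Markov process whose transition function
`P_s(A) = ∫_{A∖{0}} ρ(x-s) dx + ρ((-∞,-s]) δ_0(A)` is strong Feller continuous, and
every nonempty open set is reached with positive probability from every state through
`(0, ∞)`. -/
theorem statement17
    {Ω : Type*} [MeasurableSpace Ω] (Pr : Measure Ω) [IsProbabilityMeasure Pr]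
    (Z : ℕ → Ω → ℝ) (hZmeas : ∀ n, Measurable (Z n))
    (hindep : iIndepFun Z Pr)
    (ρ : ℝ → ℝ) (hρmeas : Measurable ρ) (hρpos : 0 ≤ ρ)
    (hdens : ∀ n, Pr.map (Z n) = volume.withDensity fun x => ENNReal.ofReal (ρ x))
    (hsupp : ∀ᵐ x ∂(volume : Measure ℝ), 0 < ρ x)
    (hmean : ∫ s, s * ρ s < 0)
    (δ : ℝ) (hδ : 0 < δ) (hinf : ∃ c : ℝ, 0 < c ∧ ∀ x ∈ Set.Icc (-δ) δ, c ≤ ρ x)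
    (W : ℕ → Ω → ℝ≥0)
    (hW0 : ∀ ω, (W 0 ω : ℝ) = max (Z 0 ω) 0)
    (hWrec : ∀ n ω, (W (n + 1) ω : ℝ) = max ((W n ω : ℝ) + Z (n + 1) ω) 0)
    (κ : Kernel ℝ≥0 ℝ≥0) [IsMarkovKernel κ]
    (hκ : ∀ (s : ℝ≥0) (A : Set ℝ≥0), MeasurableSet A →
      κ s A = (∫⁻ x in (((↑) : ℝ≥0 → ℝ) '' (A \ {0})), ENNReal.ofReal (ρ (x - s))) +
        (∫⁻ x in Set.Iic (-(s : ℝ)), ENNReal.ofReal (ρ x)) *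
          A.indicator (fun _ => (1 : ENNReal)) 0) :
    -- `(W_n)` is a time-homogeneous Markov process with transition function `κ`
    IsMarkovChain Pr κ W ∧
    -- `(W_n)` is nonevanescent
    (∀ᵐ ω ∂Pr, ∃ K : Set ℝ≥0, IsCompact K ∧ ∀ m : ℕ, ∃ n ≥ m, W n ω ∈ K) ∧
    -- `κ` is strong Feller continuous
    (∀ f : ℝ≥0 → ℝ, Measurable f → (∃ C : ℝ, ∀ x, |f x| ≤ C) →
      Continuous fun s => ∫ x, f x ∂(κ s)) ∧
    -- discrimination: every nonempty open set is reachable through `(0, ∞)`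
    (∀ (s : ℝ≥0) (O : Set ℝ≥0), IsOpen O → O.Nonempty →
      0 < ∑' n : ℕ, iterK κ n s
        {p : Fin (n + 1) → ℝ≥0 |
          (∀ i : Fin (n + 1), (i : ℕ) < n → 0 < p i) ∧ p (Fin.last n) ∈ O}) :=
  statement17_general Pr Z hZmeas hindep ρ hρmeas hρpos hdens hsupp hmean W hW0 hWrec κ hκ
end
end
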